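/- Let m be a nonnegative integer and let (c_j)_{j≥1} be complex numbers with c_j = 0 for every odd j. Set u = −m(m+1)z⁻² + Σ_{j≥1} c_j z^j ∈ ℂ((z)). Then for every λ ∈ ℂ there exists ψ ∈ ℂ((z)) of the form ψ = Σ_{n≥0} a_n z^{n−m} with a₀ = 1 satisfying ψ'' + uψ = λψ. -/

import Mathlib

/-!
Frobenius' method at the regular singular point `z = 0`: the indicial roots of
`ψ'' - m(m+1) z⁻² ψ = 0` are `-m` and `m + 1`, and for `ψ = z^{-m} Σ aₙ zⁿ` the equation reads
`n (n - 2m - 1) aₙ = λ aₙ₋₂ - Σ_{j ≥ 1} c_j aₙ₋₂₋ⱼ`. This determines every `aₙ` except at the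
resonance `n = 2m + 1`, which is odd. When `u` is even, induction shows that all odd `aₙ`
vanish, so the right-hand side is `0` there and the recursion goes through with `a₂ₘ₊₁ = 0`.
-/

open HahnSeries

/-- The formal derivative of a formal Laurent series `Σₙ aₙ zⁿ ↦ Σₙ n aₙ z^{n−1}`. -/
noncomputable def laurentDeriv (f : LaurentSeries ℂ) : LaurentSeries ℂ where
  coeff n := ((n + 1 : ℤ) : ℂ) * f.coeff (n + 1)
  isPWO_support' := by
    refine Set.IsPWO.mono (Set.IsPWO.image_of_monotone f.isPWO_support
      (f := fun m : ℤ => m - 1) (fun a b hab => by simpa using hab)) ?_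
    intro n hn
    have h1 : f.coeff (n + 1) ≠ 0 := by
      intro h0
      simp only [Function.mem_support, h0, mul_zero, ne_eq, not_true_eq_false] at hn
    exact ⟨n + 1, h1, by ring⟩

open Finset

theorem coeff_laurentDeriv (f : LaurentSeries ℂ) (n : ℤ) :
    (laurentDeriv f).coeff n = ((n + 1 : ℤ) : ℂ) * f.coeff (n + 1) := rfl

theorem sum_range_mul_sub_eq_zero_of_odd {R : Type*} [Semiring R] {f g : ℕ → R} {n : ℕ}
    (hn : Odd n) (hf : ∀ j, Odd j → f j = 0) (hg : ∀ k ≤ n, Odd k → g k = 0) :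
    ∑ j ∈ range (n + 1), f j * g (n - j) = 0 := by
  refine sum_eq_zero fun j hj => ?_
  rw [mem_range] at hj
  rcases j.even_or_odd with hj_even | hj_odd
  · rw [hg (n - j) (by omega) (Nat.Odd.sub_even (by omega) hn hj_even), mul_zero]
  · rw [hf j hj_odd, zero_mul]

/-- At the resonant index `n = 2m + 1` the divisor vanishes and `x / 0 = 0` sets `aₙ = 0`. -/
noncomputable def frobeniusCoeff (m : ℕ) (C : PowerSeries ℂ) : ℕ → ℂ
  | 0 => 1
  | 1 => 0
  | n + 2 => -(∑ j ∈ range (n + 1), PowerSeries.coeff j C * frobeniusCoeff m C (n - j)) /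
      ((n + 2) * (n + 2 - (2 * m + 1)))

section frobeniusCoeff

variable (m : ℕ)

theorem frobeniusCoeff_zero (C : PowerSeries ℂ) : frobeniusCoeff m C 0 = 1 := by
  rw [frobeniusCoeff]

theorem frobeniusCoeff_one (C : PowerSeries ℂ) : frobeniusCoeff m C 1 = 0 := by
  rw [frobeniusCoeff]

theorem frobeniusCoeff_eq_zero_of_odd {C : PowerSeries ℂ}
    (hC : ∀ j, Odd j → PowerSeries.coeff j C = 0) :
    ∀ n, Odd n → frobeniusCoeff m C n = 0
  | 0, h => absurd h Nat.not_odd_zero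
  | 1, _ => frobeniusCoeff_one m C
  | n + 2, h => by
    have hn : Odd n := by simpa [parity_simps] using h
    rw [frobeniusCoeff, sum_range_mul_sub_eq_zero_of_odd hn hC
      fun k _ hk => frobeniusCoeff_eq_zero_of_odd hC k hk, neg_zero, zero_div]

theorem frobeniusCoeff_recurrence {C : PowerSeries ℂ}
    (hC : ∀ j, Odd j → PowerSeries.coeff j C = 0) (n : ℕ) :
    ((n + 2) * (n + 2 - (2 * m + 1)) : ℂ) * frobeniusCoeff m C (n + 2)
      + PowerSeries.coeff n (C * PowerSeries.mk (frobeniusCoeff m C)) = 0 := by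
  rw [PowerSeries.coeff_mul, Nat.sum_antidiagonal_eq_sum_range_succ_mk]
  simp only [PowerSeries.coeff_mk]
  by_cases h_res : n + 2 = 2 * m + 1
  · have hn : Odd n := ⟨m - 1, by omega⟩
    have h_factor : ((n : ℂ) + 2 - (2 * m + 1)) = 0 := by
      rw [sub_eq_zero]; exact_mod_cast h_res
    rw [sum_range_mul_sub_eq_zero_of_odd hn hC
      fun k _ hk => frobeniusCoeff_eq_zero_of_odd m hC k hk, h_factor]
    ring
  · have h_factor : ((n + 2) * (n + 2 - (2 * m + 1)) : ℂ) ≠ 0 := by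
      refine mul_ne_zero (by exact_mod_cast (n + 1).succ_ne_zero) fun h => h_res ?_
      exact_mod_cast sub_eq_zero.mp h
    rw [frobeniusCoeff, mul_div_cancel₀ _ h_factor]
    ring

end frobeniusCoeff

noncomputable def frobeniusSeries (m : ℕ) (C : PowerSeries ℂ) : LaurentSeries ℂ :=
  single (-(m : ℤ)) 1 * (PowerSeries.mk (frobeniusCoeff m C) : LaurentSeries ℂ)

theorem coeff_laurentDeriv_laurentDeriv_add_mul_single_mul (m : ℕ) (A C : PowerSeries ℂ)
    (N : ℤ) :
    (laurentDeriv (laurentDeriv (single (-(m : ℤ)) 1 * (A : LaurentSeries ℂ)))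
      + (single (-2) (-((m : ℂ) * (m + 1))) + (C : LaurentSeries ℂ))
        * (single (-(m : ℤ)) 1 * (A : LaurentSeries ℂ))).coeff (N - m - 2)
      = N * (N - (2 * m + 1)) * (A : LaurentSeries ℂ).coeff N
        + ((C * A : PowerSeries ℂ) : LaurentSeries ℂ).coeff (N - 2) := by
  have h_mul : (single (-2) (-((m : ℂ) * (m + 1))) + (C : LaurentSeries ℂ))
      * (single (-(m : ℤ)) 1 * (A : LaurentSeries ℂ))
      = single (-2) (-((m : ℂ) * (m + 1))) * (single (-(m : ℤ)) 1 * (A : LaurentSeries ℂ))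
        + single (-(m : ℤ)) 1 * ((C * A : PowerSeries ℂ) : LaurentSeries ℂ) := by
    push_cast; ring
  rw [h_mul]
  simp only [coeff_add, coeff_laurentDeriv, coeff_single_mul,
    show N - m - 2 + 1 + 1 - -(m : ℤ) = N by ring, show N - m - 2 - -2 - -(m : ℤ) = N by ring,
    show N - m - 2 - -(m : ℤ) = N - 2 by ring]
  push_cast
  ring

theorem laurentDeriv_laurentDeriv_frobeniusSeries_add_mul (m : ℕ) {C : PowerSeries ℂ}
    (hC : ∀ j, Odd j → PowerSeries.coeff j C = 0) :
    laurentDeriv (laurentDeriv (frobeniusSeries m C))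
      + (single (-2) (-((m : ℂ) * (m + 1))) + (C : LaurentSeries ℂ)) * frobeniusSeries m C
      = 0 := by
  ext k
  obtain ⟨N, rfl⟩ : ∃ N : ℤ, k = N - m - 2 := ⟨k + m + 2, by ring⟩
  rw [frobeniusSeries, coeff_laurentDeriv_laurentDeriv_add_mul_single_mul,
    PowerSeries.coeff_coe, PowerSeries.coeff_coe, coeff_zero]
  rcases lt_or_ge N 0 with hN | hN
  · simp [hN, show N - 2 < 0 by omega]
  lift N to ℕ using hN
  match N with
  | 0 => simp
  | 1 => simp [frobeniusCoeff_one]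
  | n + 2 =>
    simp only [show ((n + 2 : ℕ) : ℤ) - 2 = n by push_cast; ring, Int.natAbs_natCast,
      if_neg (Int.natCast_nonneg _).not_gt, PowerSeries.coeff_mk]
    push_cast
    exact frobeniusCoeff_recurrence m hC n

/-- In the ℤ₂-symmetric case (all odd coefficients `c_j` vanish), for
`u = −m(m+1)z⁻² + Σ_{j≥1} c_j z^j ∈ ℂ((z))` and every `λ ∈ ℂ` there is a formal
Laurent series solution of `ψ'' + uψ = λψ` of the form `ψ = Σ_{n≥0} a_n z^{n−m}`
with `a₀ = 1`. -/
theorem lower_index_solution_of_even_potential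
    (m : ℕ) (c : ℕ → ℂ) (hodd : ∀ j : ℕ, Odd j → c j = 0)
    (u : LaurentSeries ℂ)
    (hu : u = HahnSeries.single (-2 : ℤ) (-((m : ℂ) * ((m : ℂ) + 1)))
        + HahnSeries.ofPowerSeries ℤ ℂ (PowerSeries.mk fun j => if j = 0 then 0 else c j)) :
    ∀ lam : ℂ, ∃ ψ : LaurentSeries ℂ,
      laurentDeriv (laurentDeriv ψ) + u * ψ = lam • ψ ∧
      ∃ a : ℕ → ℂ, a 0 = 1 ∧
        ψ = HahnSeries.single (-(m : ℤ)) 1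
          * HahnSeries.ofPowerSeries ℤ ℂ (PowerSeries.mk a) := by
  intro lam
  set C := PowerSeries.mk (fun j => if j = 0 then 0 else c j) - PowerSeries.C lam
  have hC : ∀ j, Odd j → PowerSeries.coeff j C = 0 := fun j hj => by
    simp [C, PowerSeries.coeff_C, hj.pos.ne', hodd j hj]
  refine ⟨frobeniusSeries m C, ?_, frobeniusCoeff m C, frobeniusCoeff_zero m C, rfl⟩
  have h_sol := laurentDeriv_laurentDeriv_frobeniusSeries_add_mul m hC
  rw [map_sub, ofPowerSeries_C] at h_sol
  rw [hu, ← C_mul_eq_smul]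
  linear_combination h_sol
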